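/- Every family F of N ≥ 3 lines in general position in the plane defines at least one empty 3-cell: there exist three lines of F bounding a triangle whose interior is disjoint from every line of F. Moreover, F defines at least N/3 such empty triangles. -/
import Mathlib


open Set

/-- A non-vertical line in the plane represented by (slope, intercept). -/
def lineSet (l : ℝ × ℝ) : Set (ℝ × ℝ) := {p | p.2 = l.1 * p.1 + l.2}

/-- General position: pairwise distinct slopes (hence no two parallel, none vertical
by the representation) and no three concurrent. -/
def GenPos (F : Finset (ℝ × ℝ)) : Prop :=
  (∀ l₁ ∈ F, ∀ l₂ ∈ F, l₁ ≠ l₂ → l₁.1 ≠ l₂.1) ∧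
  (∀ l₁ ∈ F, ∀ l₂ ∈ F, ∀ l₃ ∈ F, l₁ ≠ l₂ → l₁ ≠ l₃ → l₂ ≠ l₃ →
    ¬ ∃ p, p ∈ lineSet l₁ ∧ p ∈ lineSet l₂ ∧ p ∈ lineSet l₃)

/-- Intersection point of two non-parallel lines. -/
noncomputable def interPt (l₁ l₂ : ℝ × ℝ) : ℝ × ℝ :=
  ((l₂.2 - l₁.2) / (l₁.1 - l₂.1),
   l₁.1 * ((l₂.2 - l₁.2) / (l₁.1 - l₂.1)) + l₁.2)

/-- The point `p` lies strictly below the line `l` (the line is strictly above `p`). -/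
def Below (p : ℝ × ℝ) (l : ℝ × ℝ) : Prop := p.2 < l.1 * p.1 + l.2

/-- The point `p` lies strictly above the line `l` (the line is strictly below `p`). -/
def Above (p : ℝ × ℝ) (l : ℝ × ℝ) : Prop := p.2 > l.1 * p.1 + l.2

/-- A sequence of lines ordered by strictly increasing slope forms a cup: each
intermediate line lies strictly above the intersection of its two neighbours. -/
def IsCup {k : ℕ} (a : Fin k → ℝ × ℝ) : Prop :=
  StrictMono (fun i => (a i).1) ∧
  ∀ i : Fin k, ∀ _h1 : 0 < (i : ℕ), ∀ h2 : (i : ℕ) + 1 < k,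
    Below (interPt (a ⟨(i : ℕ) - 1, by omega⟩) (a ⟨(i : ℕ) + 1, h2⟩)) (a i)

/-- A sequence of lines ordered by strictly increasing slope forms a cap: each
intermediate line lies strictly below the intersection of its two neighbours. -/
def IsCap {k : ℕ} (a : Fin k → ℝ × ℝ) : Prop :=
  StrictMono (fun i => (a i).1) ∧
  ∀ i : Fin k, ∀ _h1 : 0 < (i : ℕ), ∀ h2 : (i : ℕ) + 1 < k,
    Above (interPt (a ⟨(i : ℕ) - 1, by omega⟩) (a ⟨(i : ℕ) + 1, h2⟩)) (a i)

/-- `F` contains `k` lines forming a `k`-cup. -/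
def HasCup (k : ℕ) (F : Finset (ℝ × ℝ)) : Prop :=
  ∃ a : Fin k → ℝ × ℝ, (∀ i, a i ∈ F) ∧ IsCup a

/-- `F` contains `l` lines forming an `l`-cap. -/
def HasCap (l : ℕ) (F : Finset (ℝ × ℝ)) : Prop :=
  ∃ a : Fin l → ℝ × ℝ, (∀ i, a i ∈ F) ∧ IsCap a

/-- Union of the lines of a family. -/
def linesUnion (F : Finset (ℝ × ℝ)) : Set (ℝ × ℝ) := ⋃ l ∈ F, lineSet l

/-- `P` is a cell of the arrangement of `F`: a connected component of the
complement of the union of the lines. -/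
def IsCellOf (F : Finset (ℝ × ℝ)) (P : Set (ℝ × ℝ)) : Prop :=
  ∃ p ∈ (linesUnion F)ᶜ, P = connectedComponentIn (linesUnion F)ᶜ p

/-- The line `l` contributes a (positive length) segment to the boundary of `P`:
the closure of `P` meets `l` in more than one point. -/
def Contributes (l : ℝ × ℝ) (P : Set (ℝ × ℝ)) : Prop :=
  ∃ p q : ℝ × ℝ, p ≠ q ∧ p ∈ closure P ∩ lineSet l ∧ q ∈ closure P ∩ lineSet l

/-- `P` is a cell of the arrangement of `F` with a boundary segment on every line of `F`. -/
def IsNCell (F : Finset (ℝ × ℝ)) (P : Set (ℝ × ℝ)) : Prop :=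
  IsCellOf F P ∧ ∀ l ∈ F, Contributes l P

/-- The lines of `F` are in convex position: they define a cell bounded by all of them. -/
def ConvexPos (F : Finset (ℝ × ℝ)) : Prop := ∃ P, IsNCell F P
/-- `G` consists of 3 lines of `F` bounding a triangle whose interior meets no line of `F`. -/
def EmptyTriangle (F G : Finset (ℝ × ℝ)) : Prop :=
  G ⊆ F ∧ G.card = 3 ∧
    ∃ P, IsNCell G P ∧ Bornology.IsBounded P ∧ ∀ l ∈ F, P ∩ lineSet l = ∅

namespace Tri

def fl (l p : ℝ × ℝ) : ℝ := p.2 - l.1 * p.1 - l.2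

theorem mem_lineSet {l p : ℝ × ℝ} : p ∈ lineSet l ↔ fl l p = 0 := by
  simp only [lineSet, fl, mem_setOf_eq]
  constructor <;> intro h <;> linarith

def Det (l1 l2 l3 : ℝ × ℝ) : ℝ :=
  l2.1*l3.2 - l2.1*l1.2 - l1.1*l3.2 + l3.1*l1.2 - l3.1*l2.2 + l1.1*l2.2

def Tset (l1 l2 l3 : ℝ × ℝ) : Set (ℝ × ℝ) :=
  {p | Det l1 l2 l3 * fl l1 p < 0 ∧ 0 < Det l1 l2 l3 * fl l2 p ∧ Det l1 l2 l3 * fl l3 p < 0}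

def Kset (l1 l2 l3 : ℝ × ℝ) : Set (ℝ × ℝ) :=
  {p | Det l1 l2 l3 * fl l1 p ≤ 0 ∧ 0 ≤ Det l1 l2 l3 * fl l2 p ∧ Det l1 l2 l3 * fl l3 p ≤ 0}

noncomputable def ctr (l1 l2 l3 : ℝ × ℝ) : ℝ × ℝ :=
  (((interPt l1 l2).1 + (interPt l1 l3).1 + (interPt l2 l3).1)/3,
   ((interPt l1 l2).2 + (interPt l1 l3).2 + (interPt l2 l3).2)/3)

theorem fl_ctr (l l1 l2 l3 : ℝ × ℝ) :
    fl l (ctr l1 l2 l3) = (fl l (interPt l1 l2) + fl l (interPt l1 l3) + fl l (interPt l2 l3))/3 := by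
  simp only [fl, ctr]; ring

theorem cont_fl (l : ℝ × ℝ) : Continuous (fl l) := by unfold fl; fun_prop

theorem isOpen_Tset (l1 l2 l3 : ℝ × ℝ) : IsOpen (Tset l1 l2 l3) := by
  have h : Tset l1 l2 l3 =
      {p : ℝ×ℝ | Det l1 l2 l3 * fl l1 p < 0} ∩
      ({p : ℝ×ℝ | 0 < Det l1 l2 l3 * fl l2 p} ∩ {p : ℝ×ℝ | Det l1 l2 l3 * fl l3 p < 0}) := by
    ext p; simp only [Tset, mem_setOf_eq, mem_inter_iff]
  rw [h]
  exact ((isOpen_lt (continuous_const.mul (cont_fl l1)) continuous_const).inter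
    ((isOpen_lt continuous_const (continuous_const.mul (cont_fl l2))).inter
      (isOpen_lt (continuous_const.mul (cont_fl l3)) continuous_const)))

theorem isClosed_Kset (l1 l2 l3 : ℝ × ℝ) : IsClosed (Kset l1 l2 l3) := by
  have h : Kset l1 l2 l3 =
      {p : ℝ×ℝ | Det l1 l2 l3 * fl l1 p ≤ 0} ∩
      ({p : ℝ×ℝ | 0 ≤ Det l1 l2 l3 * fl l2 p} ∩ {p : ℝ×ℝ | Det l1 l2 l3 * fl l3 p ≤ 0}) := by
    ext p; simp only [Kset, mem_setOf_eq, mem_inter_iff]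
  rw [h]
  exact ((isClosed_le (continuous_const.mul (cont_fl l1)) continuous_const).inter
    ((isClosed_le continuous_const (continuous_const.mul (cont_fl l2))).inter
      (isClosed_le (continuous_const.mul (cont_fl l3)) continuous_const)))

theorem Tset_subset_Kset (l1 l2 l3 : ℝ × ℝ) : Tset l1 l2 l3 ⊆ Kset l1 l2 l3 :=
  fun _ hp => ⟨hp.1.le, hp.2.1.le, hp.2.2.le⟩

theorem closure_Tset_subset (l1 l2 l3 : ℝ × ℝ) : closure (Tset l1 l2 l3) ⊆ Kset l1 l2 l3 :=
  closure_minimal (Tset_subset_Kset l1 l2 l3) (isClosed_Kset l1 l2 l3)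

theorem comb_neg {a b x y : ℝ} (ha : 0 ≤ a) (hb : 0 ≤ b) (hab : a + b = 1)
    (hx : x < 0) (hy : y < 0) : a * x + b * y < 0 := by
  rcases ha.eq_or_lt with h | h
  · have hb1 : b = 1 := by linarith
    rw [← h, hb1]; simpa
  · have h1 : a * x < 0 := mul_neg_of_pos_of_neg h hx
    have h2 : b * y ≤ 0 := mul_nonpos_of_nonneg_of_nonpos hb hy.le
    linarith

theorem comb_pos {a b x y : ℝ} (ha : 0 ≤ a) (hb : 0 ≤ b) (hab : a + b = 1)
    (hx : 0 < x) (hy : 0 < y) : 0 < a * x + b * y := by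
  have := comb_neg ha hb hab (neg_lt_zero.2 hx) (neg_lt_zero.2 hy)
  linarith [this]

theorem convex_Tset (l1 l2 l3 : ℝ × ℝ) : Convex ℝ (Tset l1 l2 l3) := by
  intro p hp q hq a b ha hb hab
  have key : ∀ l : ℝ × ℝ, fl l (a • p + b • q) = a * fl l p + b * fl l q := by
    intro l
    simp only [fl, Prod.fst_add, Prod.snd_add, Prod.smul_fst, Prod.smul_snd, smul_eq_mul]
    linear_combination l.2 * hab
  obtain ⟨h1, h2, h3⟩ := hp
  obtain ⟨g1, g2, g3⟩ := hq
  refine ⟨?_, ?_, ?_⟩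
  · rw [show Det l1 l2 l3 * fl l1 (a • p + b • q)
        = a * (Det l1 l2 l3 * fl l1 p) + b * (Det l1 l2 l3 * fl l1 q) by rw [key]; ring]
    exact comb_neg ha hb hab h1 g1
  · rw [show Det l1 l2 l3 * fl l2 (a • p + b • q)
        = a * (Det l1 l2 l3 * fl l2 p) + b * (Det l1 l2 l3 * fl l2 q) by rw [key]; ring]
    exact comb_pos ha hb hab h2 g2
  · rw [show Det l1 l2 l3 * fl l3 (a • p + b • q)
        = a * (Det l1 l2 l3 * fl l3 p) + b * (Det l1 l2 l3 * fl l3 q) by rw [key]; ring]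
    exact comb_neg ha hb hab h3 g3

/-- Every point of the weak region is in the closure of the open region,
provided the open region has a point. -/
theorem Kset_subset_closure {l1 l2 l3 : ℝ × ℝ} {q : ℝ × ℝ} (hq : q ∈ Tset l1 l2 l3)
    {v : ℝ × ℝ} (hv : v ∈ Kset l1 l2 l3) : v ∈ closure (Tset l1 l2 l3) := by
  apply mem_closure_iff_seq_limit.2
  refine ⟨fun n => (1 - 1/(n+1 : ℝ)) • v + (1/(n+1 : ℝ)) • q, ?_, ?_⟩
  · intro n
    have hpos : 0 < 1/(n+1 : ℝ) := by positivity
    have hle : 1/(n+1 : ℝ) ≤ 1 := by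
      rw [div_le_one (by positivity)]; simp
    set t := 1/(n+1 : ℝ) with ht
    have key : ∀ l : ℝ × ℝ, fl l ((1-t) • v + t • q) = (1-t) * fl l v + t * fl l q := by
      intro l
      simp only [fl, Prod.fst_add, Prod.snd_add, Prod.smul_fst, Prod.smul_snd, smul_eq_mul]
      ring
    obtain ⟨h1, h2, h3⟩ := hv
    obtain ⟨g1, g2, g3⟩ := hq
    refine ⟨?_, ?_, ?_⟩
    · rw [show Det l1 l2 l3 * fl l1 ((1-t) • v + t • q)
          = (1-t) * (Det l1 l2 l3 * fl l1 v) + t * (Det l1 l2 l3 * fl l1 q) by rw [key]; ring]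
      nlinarith
    · rw [show Det l1 l2 l3 * fl l2 ((1-t) • v + t • q)
          = (1-t) * (Det l1 l2 l3 * fl l2 v) + t * (Det l1 l2 l3 * fl l2 q) by rw [key]; ring]
      nlinarith
    · rw [show Det l1 l2 l3 * fl l3 ((1-t) • v + t • q)
          = (1-t) * (Det l1 l2 l3 * fl l3 v) + t * (Det l1 l2 l3 * fl l3 q) by rw [key]; ring]
      nlinarith
  · have h0 : Filter.Tendsto (fun n : ℕ => 1/(n+1 : ℝ)) Filter.atTop (nhds 0) :=
      tendsto_one_div_add_atTop_nhds_zero_nat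
    have := ((h0.const_sub 1).smul_const v).add (h0.smul_const q)
    simpa using this


theorem fundId (l1 l2 l3 p : ℝ × ℝ) :
    (l3.1 - l1.1) * fl l2 p =
      (l3.1 - l2.1) * fl l1 p + (l2.1 - l1.1) * fl l3 p + Det l1 l2 l3 := by
  simp only [fl, Det]; ring

theorem fl_interPt_left (l l' : ℝ × ℝ) : fl l (interPt l l') = 0 := by
  simp only [fl, interPt]; ring

theorem fl_interPt_right {l l' : ℝ × ℝ} (hm : l.1 ≠ l'.1) : fl l' (interPt l l') = 0 := by
  have h : l.1 - l'.1 ≠ 0 := sub_ne_zero.2 hm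
  simp only [fl, interPt]; field_simp; ring

theorem interPt_eq {l l' p : ℝ × ℝ} (hm : l.1 ≠ l'.1) (h1 : fl l p = 0) (h2 : fl l' p = 0) :
    p = interPt l l' := by
  have h : l.1 - l'.1 ≠ 0 := sub_ne_zero.2 hm
  have hx : p.1 = (l'.2 - l.2) / (l.1 - l'.1) := by
    field_simp; simp only [fl] at h1 h2; linarith
  have hy : p.2 = l.1 * ((l'.2 - l.2) / (l.1 - l'.1)) + l.2 := by
    rw [← hx]; simp only [fl] at h1; linarith
  exact Prod.ext hx hy

theorem interPt_symm {l l' : ℝ × ℝ} (hm : l.1 ≠ l'.1) : interPt l l' = interPt l' l :=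
  interPt_eq hm.symm (fl_interPt_right hm) (fl_interPt_left l l') ▸ rfl


section Triple
variable {l1 l2 l3 : ℝ × ℝ} (h12 : l1.1 < l2.1) (h23 : l2.1 < l3.1)
  (hD : Det l1 l2 l3 ≠ 0)

include h12 h23

theorem val_v13 : (l3.1 - l1.1) * fl l2 (interPt l1 l3) = Det l1 l2 l3 := by
  have h := fundId l1 l2 l3 (interPt l1 l3)
  rw [fl_interPt_left, fl_interPt_right (show l1.1 ≠ l3.1 by linarith)] at h
  linarith

theorem val_v23 : (l3.1 - l2.1) * fl l1 (interPt l2 l3) = -Det l1 l2 l3 := by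
  have h := fundId l1 l2 l3 (interPt l2 l3)
  rw [fl_interPt_left, fl_interPt_right (show l2.1 ≠ l3.1 by linarith)] at h
  linarith

theorem val_v12 : (l2.1 - l1.1) * fl l3 (interPt l1 l2) = -Det l1 l2 l3 := by
  have h := fundId l1 l2 l3 (interPt l1 l2)
  rw [fl_interPt_left, fl_interPt_right (show l1.1 ≠ l2.1 by linarith)] at h
  linarith

include hD

theorem Dv13_pos : 0 < Det l1 l2 l3 * fl l2 (interPt l1 l3) := by
  have h := val_v13 h12 h23
  have h2 : (l3.1 - l1.1) * (Det l1 l2 l3 * fl l2 (interPt l1 l3)) = Det l1 l2 l3 ^ 2 := by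
    linear_combination Det l1 l2 l3 * h
  have h3 : 0 < Det l1 l2 l3 ^ 2 := by positivity
  nlinarith [h2, h3]

theorem Dv23_neg : Det l1 l2 l3 * fl l1 (interPt l2 l3) < 0 := by
  have h := val_v23 h12 h23
  have h2 : (l3.1 - l2.1) * (Det l1 l2 l3 * fl l1 (interPt l2 l3)) = -Det l1 l2 l3 ^ 2 := by
    linear_combination Det l1 l2 l3 * h
  have h3 : 0 < Det l1 l2 l3 ^ 2 := by positivity
  nlinarith [h2, h3]

theorem Dv12_neg : Det l1 l2 l3 * fl l3 (interPt l1 l2) < 0 := by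
  have h := val_v12 h12 h23
  have h2 : (l2.1 - l1.1) * (Det l1 l2 l3 * fl l3 (interPt l1 l2)) = -Det l1 l2 l3 ^ 2 := by
    linear_combination Det l1 l2 l3 * h
  have h3 : 0 < Det l1 l2 l3 ^ 2 := by positivity
  nlinarith [h2, h3]

omit hD

theorem bound2 {p : ℝ × ℝ} (hp1 : Det l1 l2 l3 * fl l1 p ≤ 0)
    (hp3 : Det l1 l2 l3 * fl l3 p ≤ 0) :
    Det l1 l2 l3 * fl l2 p ≤ Det l1 l2 l3 * fl l2 (interPt l1 l3) := by
  have h := fundId l1 l2 l3 p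
  have hv := val_v13 h12 h23
  have key : (l3.1 - l1.1) * (Det l1 l2 l3 * fl l2 p) =
      (l3.1 - l2.1) * (Det l1 l2 l3 * fl l1 p) + (l2.1 - l1.1) * (Det l1 l2 l3 * fl l3 p) +
      (l3.1 - l1.1) * (Det l1 l2 l3 * fl l2 (interPt l1 l3)) := by
    linear_combination Det l1 l2 l3 * h - Det l1 l2 l3 * hv
  nlinarith [key]

theorem bound1 {p : ℝ × ℝ} (hp2 : 0 ≤ Det l1 l2 l3 * fl l2 p)
    (hp3 : Det l1 l2 l3 * fl l3 p ≤ 0) :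
    Det l1 l2 l3 * fl l1 (interPt l2 l3) ≤ Det l1 l2 l3 * fl l1 p := by
  have h := fundId l1 l2 l3 p
  have hv := val_v23 h12 h23
  have key : (l3.1 - l2.1) * (Det l1 l2 l3 * fl l1 p) =
      (l3.1 - l1.1) * (Det l1 l2 l3 * fl l2 p) - (l2.1 - l1.1) * (Det l1 l2 l3 * fl l3 p) +
      (l3.1 - l2.1) * (Det l1 l2 l3 * fl l1 (interPt l2 l3)) := by
    linear_combination (-(Det l1 l2 l3)) * h - Det l1 l2 l3 * hv
  nlinarith [key]

theorem bound3 {p : ℝ × ℝ} (hp2 : 0 ≤ Det l1 l2 l3 * fl l2 p)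
    (hp1 : Det l1 l2 l3 * fl l1 p ≤ 0) :
    Det l1 l2 l3 * fl l3 (interPt l1 l2) ≤ Det l1 l2 l3 * fl l3 p := by
  have h := fundId l1 l2 l3 p
  have hv := val_v12 h12 h23
  have key : (l2.1 - l1.1) * (Det l1 l2 l3 * fl l3 p) =
      (l3.1 - l1.1) * (Det l1 l2 l3 * fl l2 p) - (l3.1 - l2.1) * (Det l1 l2 l3 * fl l1 p) +
      (l2.1 - l1.1) * (Det l1 l2 l3 * fl l3 (interPt l1 l2)) := by
    linear_combination (-(Det l1 l2 l3)) * h - Det l1 l2 l3 * hv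
  nlinarith [key]

end Triple
theorem wedge_bounded {m1 c1 m2 c2 m3 c3 : ℝ} (h12 : m1 < m2) (h23 : m2 < m3) :
    ∃ R : ℝ, ∀ x y : ℝ, m1*x+c1 ≤ y → y ≤ m2*x+c2 → m3*x+c3 ≤ y → |x| ≤ R ∧ |y| ≤ R := by
  set A := (c1 - c2)/(m2 - m1) with hA
  set B := (c2 - c3)/(m3 - m2) with hB
  set X := |A| + |B| with hX
  set Y := (|m1| + |m2|) * X + |c1| + |c2| with hY
  refine ⟨X + Y + 1, ?_⟩
  intro x y hy1 hy2 hy3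
  have hAx : A ≤ x := by
    rw [hA, div_le_iff₀ (by linarith)]; nlinarith
  have hBx : x ≤ B := by
    rw [hB, le_div_iff₀ (by linarith)]; nlinarith
  have hxX : |x| ≤ X := by
    rw [abs_le]
    constructor
    · have := neg_abs_le A
      have := abs_nonneg B
      linarith
    · have := le_abs_self B
      have := abs_nonneg A
      linarith
  have hmx1 : -( |m1| * X) ≤ m1 * x := by
    have h1 : |m1 * x| ≤ |m1| * X := by
      rw [abs_mul]
      exact mul_le_mul_of_nonneg_left hxX (abs_nonneg m1)
    have := neg_abs_le (m1 * x)
    linarith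
  have hmx2 : m2 * x ≤ |m2| * X := by
    have h1 : |m2 * x| ≤ |m2| * X := by
      rw [abs_mul]
      exact mul_le_mul_of_nonneg_left hxX (abs_nonneg m2)
    have := le_abs_self (m2 * x)
    linarith
  have n1 : 0 ≤ |m1| * X := by positivity
  have n2 : 0 ≤ |m2| * X := by positivity
  have nc1 := abs_nonneg c1
  have nc2 := abs_nonneg c2
  have hyY : |y| ≤ Y := by
    rw [abs_le]
    constructor
    · have := neg_abs_le c1
      rw [hY]; linarith
    · have := le_abs_self c2
      rw [hY]; linarith
  have h0X : 0 ≤ X := by positivity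
  have h0Y : 0 ≤ Y := by
    have : (0:ℝ) ≤ (|m1| + |m2|) * X := by positivity
    have := abs_nonneg c1
    have := abs_nonneg c2
    linarith
  constructor <;> [skip; skip] <;> linarith

section Triple2
variable {l1 l2 l3 : ℝ × ℝ} (h12 : l1.1 < l2.1) (h23 : l2.1 < l3.1)
  (hD : Det l1 l2 l3 ≠ 0)
include h12 h23 hD

theorem ctr_mem : ctr l1 l2 l3 ∈ Tset l1 l2 l3 := by
  have hm12 : l1.1 ≠ l2.1 := by linarith
  have hm13 : l1.1 ≠ l3.1 := by linarith
  have hm23 : l2.1 ≠ l3.1 := by linarith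
  have e1 := fl_ctr l1 l1 l2 l3
  have e2 := fl_ctr l2 l1 l2 l3
  have e3 := fl_ctr l3 l1 l2 l3
  rw [fl_interPt_left l1 l2, fl_interPt_left l1 l3] at e1
  rw [fl_interPt_right hm12, fl_interPt_left l2 l3] at e2
  rw [fl_interPt_right hm13, fl_interPt_right hm23] at e3
  have b1 := Dv23_neg h12 h23 hD
  have b2 := Dv13_pos h12 h23 hD
  have b3 := Dv12_neg h12 h23 hD
  refine ⟨?_, ?_, ?_⟩
  · have : Det l1 l2 l3 * fl l1 (ctr l1 l2 l3)
        = Det l1 l2 l3 * fl l1 (interPt l2 l3) / 3 := by rw [e1]; ring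
    linarith
  · have : Det l1 l2 l3 * fl l2 (ctr l1 l2 l3)
        = Det l1 l2 l3 * fl l2 (interPt l1 l3) / 3 := by rw [e2]; ring
    linarith
  · have : Det l1 l2 l3 * fl l3 (ctr l1 l2 l3)
        = Det l1 l2 l3 * fl l3 (interPt l1 l2) / 3 := by rw [e3]; ring
    linarith

theorem v12_mem_K : interPt l1 l2 ∈ Kset l1 l2 l3 := by
  refine ⟨?_, ?_, (Dv12_neg h12 h23 hD).le⟩
  · rw [fl_interPt_left l1 l2]; simp
  · rw [fl_interPt_right (show l1.1 ≠ l2.1 by linarith)]; simp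

theorem v13_mem_K : interPt l1 l3 ∈ Kset l1 l2 l3 := by
  refine ⟨?_, (Dv13_pos h12 h23 hD).le, ?_⟩
  · rw [fl_interPt_left l1 l3]; simp
  · rw [fl_interPt_right (show l1.1 ≠ l3.1 by linarith)]; simp

theorem v23_mem_K : interPt l2 l3 ∈ Kset l1 l2 l3 := by
  refine ⟨(Dv23_neg h12 h23 hD).le, ?_, ?_⟩
  · rw [fl_interPt_left l2 l3]; simp
  · rw [fl_interPt_right (show l2.1 ≠ l3.1 by linarith)]; simp

theorem v12_ne_v13 : interPt l1 l2 ≠ interPt l1 l3 := by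
  intro h
  have b3 := Dv12_neg h12 h23 hD
  rw [h, fl_interPt_right (show l1.1 ≠ l3.1 by linarith)] at b3
  simp at b3

theorem v12_ne_v23 : interPt l1 l2 ≠ interPt l2 l3 := by
  intro h
  have b1 := Dv23_neg h12 h23 hD
  rw [← h, fl_interPt_left l1 l2] at b1
  simp at b1

theorem v13_ne_v23 : interPt l1 l3 ≠ interPt l2 l3 := by
  intro h
  have b2 := Dv13_pos h12 h23 hD
  rw [h, fl_interPt_left l2 l3] at b2
  simp at b2

omit h12 h23 in
theorem frontier_sub {p : ℝ × ℝ} (hpK : p ∈ Kset l1 l2 l3) (hpT : p ∉ Tset l1 l2 l3) :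
    p ∈ lineSet l1 ∪ lineSet l2 ∪ lineSet l3 := by
  obtain ⟨k1, k2, k3⟩ := hpK
  simp only [Tset, mem_setOf_eq, not_and_or, not_lt] at hpT
  have hfl : fl l1 p = 0 ∨ fl l2 p = 0 ∨ fl l3 p = 0 := by
    rcases hpT with h | h | h
    · left
      have : Det l1 l2 l3 * fl l1 p = 0 := le_antisymm k1 h
      rcases mul_eq_zero.1 this with h' | h'
      · exact absurd h' hD
      · exact h'
    · right; left
      have : Det l1 l2 l3 * fl l2 p = 0 := le_antisymm h k2
      rcases mul_eq_zero.1 this with h' | h'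
      · exact absurd h' hD
      · exact h'
    · right; right
      have : Det l1 l2 l3 * fl l3 p = 0 := le_antisymm k3 h
      rcases mul_eq_zero.1 this with h' | h'
      · exact absurd h' hD
      · exact h'
  rcases hfl with h | h | h
  · exact Or.inl (Or.inl (mem_lineSet.2 h))
  · exact Or.inl (Or.inr (mem_lineSet.2 h))
  · exact Or.inr (mem_lineSet.2 h)

omit h12 h23 in
theorem Tset_subset_compl :
    Tset l1 l2 l3 ⊆ (lineSet l1 ∪ lineSet l2 ∪ lineSet l3)ᶜ := by
  intro p hp
  obtain ⟨h1, h2, h3⟩ := hp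
  intro hmem
  rcases hmem with (h | h) | h <;> rw [mem_lineSet] at h
  · rw [h] at h1; simp at h1
  · rw [h] at h2; simp at h2
  · rw [h] at h3; simp at h3

theorem cc_eq :
    connectedComponentIn (lineSet l1 ∪ lineSet l2 ∪ lineSet l3)ᶜ (ctr l1 l2 l3)
      = Tset l1 l2 l3 := by
  have hc := ctr_mem h12 h23 hD
  have hTsub := Tset_subset_compl (l1 := l1) (l2 := l2) (l3 := l3) hD
  have hcompl : ctr l1 l2 l3 ∈ (lineSet l1 ∪ lineSet l2 ∪ lineSet l3)ᶜ := hTsub hc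
  apply Subset.antisymm
  · set C := connectedComponentIn (lineSet l1 ∪ lineSet l2 ∪ lineSet l3)ᶜ (ctr l1 l2 l3) with hC
    have hCpre : IsPreconnected C := isPreconnected_connectedComponentIn
    have hCsub : C ⊆ (lineSet l1 ∪ lineSet l2 ∪ lineSet l3)ᶜ := connectedComponentIn_subset _ _
    have hctrC : ctr l1 l2 l3 ∈ C := mem_connectedComponentIn hcompl
    intro x hx
    by_contra hxT
    have key : ∀ y ∈ C, y ∉ Tset l1 l2 l3 → y ∈ (closure (Tset l1 l2 l3))ᶜ := by
      intro y hyC hyT hycl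
      exact hCsub hyC (frontier_sub hD (closure_Tset_subset l1 l2 l3 hycl) hyT)
    have cover : C ⊆ Tset l1 l2 l3 ∪ (closure (Tset l1 l2 l3))ᶜ := by
      intro y hy
      by_cases hyT : y ∈ Tset l1 l2 l3
      · exact Or.inl hyT
      · exact Or.inr (key y hy hyT)
    obtain ⟨z, hzC, hzT, hzcl⟩ := hCpre _ _ (isOpen_Tset l1 l2 l3)
      isClosed_closure.isOpen_compl cover ⟨ctr l1 l2 l3, hctrC, hc⟩
      ⟨x, hx, key x hx hxT⟩
    exact hzcl (subset_closure hzT)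
  · exact (convex_Tset l1 l2 l3).isPreconnected.subset_connectedComponentIn hc hTsub

theorem Kset_abs_bound : ∃ R : ℝ, ∀ p ∈ Kset l1 l2 l3, |p.1| ≤ R ∧ |p.2| ≤ R := by
    rcases hD.lt_or_gt with hDn | hDp
    · obtain ⟨R, hR⟩ := wedge_bounded (m1 := l1.1) (c1 := l1.2) (m2 := l2.1) (c2 := l2.2)
        (m3 := l3.1) (c3 := l3.2) h12 h23
      refine ⟨R, fun p hp => ?_⟩
      obtain ⟨k1, k2, k3⟩ := hp
      have f1 : 0 ≤ fl l1 p := by nlinarith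
      have f2 : fl l2 p ≤ 0 := by nlinarith
      have f3 : 0 ≤ fl l3 p := by nlinarith
      simp only [fl] at f1 f2 f3
      exact hR p.1 p.2 (by linarith) (by linarith) (by linarith)
    · obtain ⟨R, hR⟩ := wedge_bounded (m1 := -l3.1) (c1 := -l3.2) (m2 := -l2.1) (c2 := -l2.2)
        (m3 := -l1.1) (c3 := -l1.2) (by linarith) (by linarith)
      refine ⟨R, fun p hp => ?_⟩
      obtain ⟨k1, k2, k3⟩ := hp
      have f1 : fl l1 p ≤ 0 := by nlinarith
      have f2 : 0 ≤ fl l2 p := by nlinarith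
      have f3 : fl l3 p ≤ 0 := by nlinarith
      simp only [fl] at f1 f2 f3
      have := hR p.1 (-p.2) (by linarith) (by linarith) (by linarith)
      rcases this with ⟨hx, hy⟩
      rw [abs_neg] at hy
      exact ⟨hx, hy⟩

theorem bounded_Kset : Bornology.IsBounded (Kset l1 l2 l3) := by
  obtain ⟨R, hR⟩ := Kset_abs_bound h12 h23 hD
  apply Bornology.IsBounded.subset
    ((Metric.isBounded_Icc (-R) R).prod (Metric.isBounded_Icc (-R) R))
  intro p hp
  obtain ⟨h1, h2⟩ := hR p hp
  rw [abs_le] at h1 h2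
  exact ⟨h1, h2⟩

theorem bounded_Tset : Bornology.IsBounded (Tset l1 l2 l3) :=
  (bounded_Kset h12 h23 hD).subset (Tset_subset_Kset l1 l2 l3)

end Triple2

section Crossing
variable {l1 l2 l3 : ℝ × ℝ} (h12 : l1.1 < l2.1) (h23 : l2.1 < l3.1)
  (hD : Det l1 l2 l3 ≠ 0)
include h12 h23 hD

theorem exists_boundary_pts {c p : ℝ × ℝ}
    (hpT : p ∈ Tset l1 l2 l3) (hpc : fl c p = 0) :
    ∃ r s : ℝ × ℝ, r.1 ≠ s.1 ∧ r ∈ Kset l1 l2 l3 ∧ s ∈ Kset l1 l2 l3 ∧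
      fl c r = 0 ∧ fl c s = 0 ∧
      (fl l1 r = 0 ∨ fl l2 r = 0 ∨ fl l3 r = 0) ∧
      (fl l1 s = 0 ∨ fl l2 s = 0 ∨ fl l3 s = 0) := by
  obtain ⟨R, hR⟩ := Kset_abs_bound h12 h23 hD
  set g : ℝ → ℝ × ℝ := fun x => (x, c.1 * x + c.2) with hgdef
  have hg : Continuous g := by
    apply Continuous.prodMk continuous_id
    fun_prop
  set X := g ⁻¹' (Kset l1 l2 l3) with hXdef
  have hXc : IsClosed X := (isClosed_Kset l1 l2 l3).preimage hg
  have hp2 : p.2 = c.1 * p.1 + c.2 := by simp only [fl] at hpc; linarith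
  have hgp : g p.1 = p := by rw [hgdef]; exact Prod.ext rfl hp2.symm
  have hpX : p.1 ∈ X := by
    rw [hXdef, mem_preimage, hgp]; exact Tset_subset_Kset _ _ _ hpT
  have hbb : BddBelow X := by
    refine ⟨-R, fun x hx => ?_⟩
    have := (hR _ hx).1
    simp only [hgdef] at this
    rw [abs_le] at this; linarith [this.1]
  have hba : BddAbove X := by
    refine ⟨R, fun x hx => ?_⟩
    have := (hR _ hx).1
    simp only [hgdef] at this
    rw [abs_le] at this; linarith [this.2]
  have hne : X.Nonempty := ⟨p.1, hpX⟩
  have hu : sInf X ∈ X := hXc.csInf_mem hne hbb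
  have hv : sSup X ∈ X := hXc.csSup_mem hne hba
  have hT_open : IsOpen (g ⁻¹' (Tset l1 l2 l3)) := (isOpen_Tset l1 l2 l3).preimage hg
  have escape : ∀ x : ℝ, g x ∈ Tset l1 l2 l3 → ∃ ε > 0, x - ε ∈ X ∧ x + ε ∈ X := by
    intro x hx
    obtain ⟨ε, hε, hball⟩ := Metric.isOpen_iff.1 hT_open x (mem_preimage.2 hx)
    refine ⟨ε/2, by linarith, ?_, ?_⟩
    · have h1 : x - ε/2 ∈ Metric.ball x ε := by
        rw [Metric.mem_ball, Real.dist_eq, show x - ε/2 - x = -(ε/2) by ring, abs_neg,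
          abs_of_nonneg (by linarith : (0:ℝ) ≤ ε/2)]
        linarith
      exact Tset_subset_Kset _ _ _ (hball h1)
    · have h1 : x + ε/2 ∈ Metric.ball x ε := by
        rw [Metric.mem_ball, Real.dist_eq, show x + ε/2 - x = ε/2 by ring,
          abs_of_nonneg (by linarith : (0:ℝ) ≤ ε/2)]
        linarith
      exact Tset_subset_Kset _ _ _ (hball h1)
  have huv : sInf X < sSup X := by
    obtain ⟨ε, hε, hm, hp'⟩ := escape p.1 (by rw [hgp]; exact hpT)
    calc sInf X ≤ p.1 - ε := csInf_le hbb hm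
    _ < p.1 + ε := by linarith
    _ ≤ sSup X := le_csSup hba hp'
  have vanish : ∀ x ∈ X, x = sInf X ∨ x = sSup X →
      fl l1 (g x) = 0 ∨ fl l2 (g x) = 0 ∨ fl l3 (g x) = 0 := by
    intro x hxX hend
    by_contra hcon
    push_neg at hcon
    obtain ⟨n1, n2, n3⟩ := hcon
    obtain ⟨k1, k2, k3⟩ := hxX
    have hTx : g x ∈ Tset l1 l2 l3 :=
      ⟨k1.lt_of_ne (mul_ne_zero hD n1), (k2.lt_of_ne (Ne.symm (mul_ne_zero hD n2))),
        k3.lt_of_ne (mul_ne_zero hD n3)⟩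
    obtain ⟨ε, hε, hm, hp'⟩ := escape x hTx
    rcases hend with h | h
    · have := csInf_le hbb hm
      rw [← h] at this; linarith
    · have := le_csSup hba hp'
      rw [← h] at this; linarith
  have flc : ∀ x : ℝ, fl c (g x) = 0 := by
    intro x; simp only [hgdef, fl]; ring
  refine ⟨g (sInf X), g (sSup X), ?_, hu, hv, flc _, flc _,
    vanish _ hu (Or.inl rfl), vanish _ hv (Or.inr rfl)⟩
  simp only [hgdef]
  exact ne_of_lt huv

end Crossing

theorem abs_lt_of_mul {D x y : ℝ} (hD : D ≠ 0) (hx : 0 < D * x) (hxy : D * x < D * y) :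
    |x| < |y| := by
  rcases hD.lt_or_gt with h | h
  · have hx' : x < 0 := by nlinarith
    have hy' : y < x := by nlinarith
    rw [abs_of_neg hx', abs_of_neg (by linarith)]
    linarith
  · have hx' : 0 < x := by nlinarith
    have hy' : x < y := by nlinarith
    rw [abs_of_pos hx', abs_of_pos (by linarith)]
    linarith

section Empty
variable {l1 l2 l3 : ℝ × ℝ} (h12 : l1.1 < l2.1) (h23 : l2.1 < l3.1)
  (hD : Det l1 l2 l3 ≠ 0)
include h12 h23 hD

theorem bound2_eq {p : ℝ × ℝ} (hpK : p ∈ Kset l1 l2 l3)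
    (heq : Det l1 l2 l3 * fl l2 p = Det l1 l2 l3 * fl l2 (interPt l1 l3)) :
    fl l1 p = 0 ∧ fl l3 p = 0 := by
  obtain ⟨k1, k2, k3⟩ := hpK
  have h := fundId l1 l2 l3 p
  have hv := val_v13 h12 h23
  have key : (l3.1 - l1.1) * (Det l1 l2 l3 * fl l2 p) =
      (l3.1 - l2.1) * (Det l1 l2 l3 * fl l1 p) + (l2.1 - l1.1) * (Det l1 l2 l3 * fl l3 p) +
      (l3.1 - l1.1) * (Det l1 l2 l3 * fl l2 (interPt l1 l3)) := by
    linear_combination Det l1 l2 l3 * h - Det l1 l2 l3 * hv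
  have z1 : Det l1 l2 l3 * fl l1 p = 0 := by nlinarith
  have z3 : Det l1 l2 l3 * fl l3 p = 0 := by nlinarith
  constructor
  · rcases mul_eq_zero.1 z1 with h' | h'
    · exact absurd h' hD
    · exact h'
  · rcases mul_eq_zero.1 z3 with h' | h'
    · exact absurd h' hD
    · exact h'

theorem bound1_eq {p : ℝ × ℝ} (hpK : p ∈ Kset l1 l2 l3)
    (heq : Det l1 l2 l3 * fl l1 p = Det l1 l2 l3 * fl l1 (interPt l2 l3)) :
    fl l2 p = 0 ∧ fl l3 p = 0 := by
  obtain ⟨k1, k2, k3⟩ := hpK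
  have h := fundId l1 l2 l3 p
  have hv := val_v23 h12 h23
  have key : (l3.1 - l2.1) * (Det l1 l2 l3 * fl l1 p) =
      (l3.1 - l1.1) * (Det l1 l2 l3 * fl l2 p) - (l2.1 - l1.1) * (Det l1 l2 l3 * fl l3 p) +
      (l3.1 - l2.1) * (Det l1 l2 l3 * fl l1 (interPt l2 l3)) := by
    linear_combination (-(Det l1 l2 l3)) * h - Det l1 l2 l3 * hv
  have z2 : Det l1 l2 l3 * fl l2 p = 0 := by nlinarith
  have z3 : Det l1 l2 l3 * fl l3 p = 0 := by nlinarith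
  constructor
  · rcases mul_eq_zero.1 z2 with h' | h'
    · exact absurd h' hD
    · exact h'
  · rcases mul_eq_zero.1 z3 with h' | h'
    · exact absurd h' hD
    · exact h'

theorem bound3_eq {p : ℝ × ℝ} (hpK : p ∈ Kset l1 l2 l3)
    (heq : Det l1 l2 l3 * fl l3 p = Det l1 l2 l3 * fl l3 (interPt l1 l2)) :
    fl l1 p = 0 ∧ fl l2 p = 0 := by
  obtain ⟨k1, k2, k3⟩ := hpK
  have h := fundId l1 l2 l3 p
  have hv := val_v12 h12 h23
  have key : (l2.1 - l1.1) * (Det l1 l2 l3 * fl l3 p) =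
      (l3.1 - l1.1) * (Det l1 l2 l3 * fl l2 p) - (l3.1 - l2.1) * (Det l1 l2 l3 * fl l1 p) +
      (l2.1 - l1.1) * (Det l1 l2 l3 * fl l3 (interPt l1 l2)) := by
    linear_combination (-(Det l1 l2 l3)) * h - Det l1 l2 l3 * hv
  have z1 : Det l1 l2 l3 * fl l1 p = 0 := by nlinarith
  have z2 : Det l1 l2 l3 * fl l2 p = 0 := by nlinarith
  constructor
  · rcases mul_eq_zero.1 z1 with h' | h'
    · exact absurd h' hD
    · exact h'
  · rcases mul_eq_zero.1 z2 with h' | h'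
    · exact absurd h' hD
    · exact h'

theorem empty2 {c : ℝ × ℝ} (hc1 : c.1 ≠ l1.1) (hc2 : c.1 ≠ l2.1) (hc3 : c.1 ≠ l3.1)
    (hnc : ∀ e, e = l1 ∨ e = l3 → ¬ ∃ q : ℝ × ℝ, fl c q = 0 ∧ fl e q = 0 ∧ fl l2 q = 0)
    (hnc2 : ¬ ∃ q : ℝ × ℝ, fl c q = 0 ∧ fl l1 q = 0 ∧ fl l3 q = 0)
    (hmin : ∀ e, e = l1 ∨ e = l3 → |fl l2 (interPt l1 l3)| ≤ |fl l2 (interPt c e)|)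
    {p : ℝ × ℝ} (hpT : p ∈ Tset l1 l2 l3) (hpc : fl c p = 0) : False := by
  obtain ⟨r, s, hrs, hrK, hsK, hcr, hcs, hr, hs⟩ := exists_boundary_pts h12 h23 hD hpT hpc
  have main : ∀ t : ℝ × ℝ, t ∈ Kset l1 l2 l3 → fl c t = 0 →
      ∀ e, (e = l1 ∨ e = l3) → fl e t = 0 → False := by
    intro t htK hct e he het
    have hce : c.1 ≠ e.1 := by rcases he with h | h <;> rw [h] <;> assumption
    have hte : t = interPt c e := interPt_eq hce hct het
    have h2pos : 0 < Det l1 l2 l3 * fl l2 t := by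
      rcases eq_or_lt_of_le htK.2.1 with h | h
      · exfalso
        apply hnc e he
        have h0 : Det l1 l2 l3 * fl l2 t = 0 := h.symm
        rcases mul_eq_zero.1 h0 with h' | h'
        · exact absurd h' hD
        · exact ⟨t, hct, het, h'⟩
      · exact h
    have hlt : Det l1 l2 l3 * fl l2 t < Det l1 l2 l3 * fl l2 (interPt l1 l3) := by
      rcases eq_or_lt_of_le (bound2 h12 h23 htK.1 htK.2.2) with h | h
      · exfalso
        obtain ⟨z1, z3⟩ := bound2_eq h12 h23 hD htK h
        exact hnc2 ⟨t, hct, z1, z3⟩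
      · exact h
    have habs : |fl l2 t| < |fl l2 (interPt l1 l3)| := abs_lt_of_mul hD h2pos hlt
    have hm := hmin e he
    rw [← hte] at hm
    linarith
  rcases hr with h1 | h2 | h3
  · exact main r hrK hcr l1 (Or.inl rfl) h1
  · rcases hs with g1 | g2 | g3
    · exact main s hsK hcs l1 (Or.inl rfl) g1
    · have e1 : r = interPt c l2 := interPt_eq hc2 hcr h2
      have e2 : s = interPt c l2 := interPt_eq hc2 hcs g2
      exact hrs (by rw [e1, e2])
    · exact main s hsK hcs l3 (Or.inr rfl) g3
  · exact main r hrK hcr l3 (Or.inr rfl) h3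

theorem empty1 {c : ℝ × ℝ} (hc1 : c.1 ≠ l1.1) (hc2 : c.1 ≠ l2.1) (hc3 : c.1 ≠ l3.1)
    (hnc : ∀ e, e = l2 ∨ e = l3 → ¬ ∃ q : ℝ × ℝ, fl c q = 0 ∧ fl e q = 0 ∧ fl l1 q = 0)
    (hnc2 : ¬ ∃ q : ℝ × ℝ, fl c q = 0 ∧ fl l2 q = 0 ∧ fl l3 q = 0)
    (hmin : ∀ e, e = l2 ∨ e = l3 → |fl l1 (interPt l2 l3)| ≤ |fl l1 (interPt c e)|)
    {p : ℝ × ℝ} (hpT : p ∈ Tset l1 l2 l3) (hpc : fl c p = 0) : False := by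
  obtain ⟨r, s, hrs, hrK, hsK, hcr, hcs, hr, hs⟩ := exists_boundary_pts h12 h23 hD hpT hpc
  have main : ∀ t : ℝ × ℝ, t ∈ Kset l1 l2 l3 → fl c t = 0 →
      ∀ e, (e = l2 ∨ e = l3) → fl e t = 0 → False := by
    intro t htK hct e he het
    have hce : c.1 ≠ e.1 := by rcases he with h | h <;> rw [h] <;> assumption
    have hte : t = interPt c e := interPt_eq hce hct het
    have h1neg : Det l1 l2 l3 * fl l1 t < 0 := by
      rcases eq_or_lt_of_le htK.1 with h | h
      · exfalso
        apply hnc e he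
        rcases mul_eq_zero.1 h with h' | h'
        · exact absurd h' hD
        · exact ⟨t, hct, het, h'⟩
      · exact h
    have hlt : Det l1 l2 l3 * fl l1 (interPt l2 l3) < Det l1 l2 l3 * fl l1 t := by
      rcases eq_or_lt_of_le (bound1 h12 h23 htK.2.1 htK.2.2) with h | h
      · exfalso
        obtain ⟨z2, z3⟩ := bound1_eq h12 h23 hD htK h.symm
        exact hnc2 ⟨t, hct, z2, z3⟩
      · exact h
    have habs : |fl l1 t| < |fl l1 (interPt l2 l3)| := by
      apply abs_lt_of_mul (neg_ne_zero.2 hD) (by linarith) (by linarith)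
    have hm := hmin e he
    rw [← hte] at hm
    linarith
  rcases hr with h1 | h2 | h3
  · rcases hs with g1 | g2 | g3
    · have e1 : r = interPt c l1 := interPt_eq hc1 hcr h1
      have e2 : s = interPt c l1 := interPt_eq hc1 hcs g1
      exact hrs (by rw [e1, e2])
    · exact main s hsK hcs l2 (Or.inl rfl) g2
    · exact main s hsK hcs l3 (Or.inr rfl) g3
  · exact main r hrK hcr l2 (Or.inl rfl) h2
  · exact main r hrK hcr l3 (Or.inr rfl) h3

theorem empty3 {c : ℝ × ℝ} (hc1 : c.1 ≠ l1.1) (hc2 : c.1 ≠ l2.1) (hc3 : c.1 ≠ l3.1)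
    (hnc : ∀ e, e = l1 ∨ e = l2 → ¬ ∃ q : ℝ × ℝ, fl c q = 0 ∧ fl e q = 0 ∧ fl l3 q = 0)
    (hnc2 : ¬ ∃ q : ℝ × ℝ, fl c q = 0 ∧ fl l1 q = 0 ∧ fl l2 q = 0)
    (hmin : ∀ e, e = l1 ∨ e = l2 → |fl l3 (interPt l1 l2)| ≤ |fl l3 (interPt c e)|)
    {p : ℝ × ℝ} (hpT : p ∈ Tset l1 l2 l3) (hpc : fl c p = 0) : False := by
  obtain ⟨r, s, hrs, hrK, hsK, hcr, hcs, hr, hs⟩ := exists_boundary_pts h12 h23 hD hpT hpc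
  have main : ∀ t : ℝ × ℝ, t ∈ Kset l1 l2 l3 → fl c t = 0 →
      ∀ e, (e = l1 ∨ e = l2) → fl e t = 0 → False := by
    intro t htK hct e he het
    have hce : c.1 ≠ e.1 := by rcases he with h | h <;> rw [h] <;> assumption
    have hte : t = interPt c e := interPt_eq hce hct het
    have h3neg : Det l1 l2 l3 * fl l3 t < 0 := by
      rcases eq_or_lt_of_le htK.2.2 with h | h
      · exfalso
        apply hnc e he
        rcases mul_eq_zero.1 h with h' | h'
        · exact absurd h' hD
        · exact ⟨t, hct, het, h'⟩
      · exact h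
    have hlt : Det l1 l2 l3 * fl l3 (interPt l1 l2) < Det l1 l2 l3 * fl l3 t := by
      rcases eq_or_lt_of_le (bound3 h12 h23 htK.2.1 htK.1) with h | h
      · exfalso
        obtain ⟨z1, z2⟩ := bound3_eq h12 h23 hD htK h.symm
        exact hnc2 ⟨t, hct, z1, z2⟩
      · exact h
    have habs : |fl l3 t| < |fl l3 (interPt l1 l2)| := by
      apply abs_lt_of_mul (neg_ne_zero.2 hD) (by linarith) (by linarith)
    have hm := hmin e he
    rw [← hte] at hm
    linarith
  rcases hr with h1 | h2 | h3
  · exact main r hrK hcr l1 (Or.inl rfl) h1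
  · exact main r hrK hcr l2 (Or.inr rfl) h2
  · rcases hs with g1 | g2 | g3
    · exact main s hsK hcs l1 (Or.inl rfl) g1
    · exact main s hsK hcs l2 (Or.inr rfl) g2
    · have e1 : r = interPt c l3 := interPt_eq hc3 hcr h3
      have e2 : s = interPt c l3 := interPt_eq hc3 hcs g3
      exact hrs (by rw [e1, e2])

end Empty

section Build
variable {F : Finset (ℝ × ℝ)} (hgp : GenPos F) {l1 l2 l3 : ℝ × ℝ}
  (h12 : l1.1 < l2.1) (h23 : l2.1 < l3.1)
  (m1 : l1 ∈ F) (m2 : l2 ∈ F) (m3 : l3 ∈ F)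
include hgp h12 h23 m1 m2 m3

theorem det_ne : Det l1 l2 l3 ≠ 0 := by
  intro h0
  have hne12 : l1 ≠ l2 := fun h => absurd (h ▸ h12) (lt_irrefl _)
  have hne23 : l2 ≠ l3 := fun h => absurd (h ▸ h23) (lt_irrefl _)
  have hne13 : l1 ≠ l3 := fun h => absurd (h ▸ (h12.trans h23)) (lt_irrefl _)
  have hv := val_v13 h12 h23
  rw [h0] at hv
  have h2 : fl l2 (interPt l1 l3) = 0 := by
    rcases mul_eq_zero.1 hv with h' | h'
    · exfalso; linarith
    · exact h'
  exact hgp.2 l1 m1 l2 m2 l3 m3 hne12 hne13 hne23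
    ⟨interPt l1 l3, mem_lineSet.2 (fl_interPt_left l1 l3), mem_lineSet.2 h2,
      mem_lineSet.2 (fl_interPt_right (show l1.1 ≠ l3.1 by linarith))⟩

theorem build_core
    (hempty : ∀ c ∈ F, c ≠ l1 → c ≠ l2 → c ≠ l3 →
      ∀ p ∈ Tset l1 l2 l3, fl c p ≠ 0) :
    EmptyTriangle F {l1, l2, l3} := by
  classical
  have hD := det_ne hgp h12 h23 m1 m2 m3
  have hne12 : l1 ≠ l2 := fun h => absurd (h ▸ h12) (lt_irrefl _)
  have hne23 : l2 ≠ l3 := fun h => absurd (h ▸ h23) (lt_irrefl _)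
  have hne13 : l1 ≠ l3 := fun h => absurd (h ▸ (h12.trans h23)) (lt_irrefl _)
  have hsub : ({l1, l2, l3} : Finset (ℝ × ℝ)) ⊆ F := by
    intro x hx
    simp only [Finset.mem_insert, Finset.mem_singleton] at hx
    rcases hx with h | h | h <;> subst h <;> assumption
  have hcard : ({l1, l2, l3} : Finset (ℝ × ℝ)).card = 3 := by
    rw [Finset.card_insert_of_notMem (by simp [hne12, hne13]),
      Finset.card_insert_of_notMem (by simp [hne23]), Finset.card_singleton]
  have hU : linesUnion ({l1, l2, l3} : Finset (ℝ × ℝ))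
      = lineSet l1 ∪ lineSet l2 ∪ lineSet l3 := by
    ext p
    simp only [linesUnion, mem_iUnion, Finset.mem_insert, Finset.mem_singleton,
      mem_union, exists_prop]
    constructor
    · rintro ⟨l, (h | h | h), hl⟩ <;> subst h
      · exact Or.inl (Or.inl hl)
      · exact Or.inl (Or.inr hl)
      · exact Or.inr hl
    · rintro ((h | h) | h)
      · exact ⟨l1, Or.inl rfl, h⟩
      · exact ⟨l2, Or.inr (Or.inl rfl), h⟩
      · exact ⟨l3, Or.inr (Or.inr rfl), h⟩
  have hctr := ctr_mem h12 h23 hD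
  have hclosure : ∀ v ∈ Kset l1 l2 l3, v ∈ closure (Tset l1 l2 l3) :=
    fun v hv => Kset_subset_closure hctr hv
  refine ⟨hsub, hcard, Tset l1 l2 l3, ⟨?_, ?_⟩, bounded_Tset h12 h23 hD, ?_⟩
  · -- IsCellOf
    refine ⟨ctr l1 l2 l3, ?_, ?_⟩
    · rw [hU]; exact Tset_subset_compl hD hctr
    · rw [hU, cc_eq h12 h23 hD]
  · -- Contributes
    intro l hl
    simp only [Finset.mem_insert, Finset.mem_singleton] at hl
    rcases hl with h | h | h <;> rw [h]
    · exact ⟨interPt l1 l2, interPt l1 l3, v12_ne_v13 h12 h23 hD,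
        ⟨hclosure _ (v12_mem_K h12 h23 hD), mem_lineSet.2 (fl_interPt_left l1 l2)⟩,
        ⟨hclosure _ (v13_mem_K h12 h23 hD), mem_lineSet.2 (fl_interPt_left l1 l3)⟩⟩
    · exact ⟨interPt l1 l2, interPt l2 l3, v12_ne_v23 h12 h23 hD,
        ⟨hclosure _ (v12_mem_K h12 h23 hD),
          mem_lineSet.2 (fl_interPt_right (show l1.1 ≠ l2.1 by linarith))⟩,
        ⟨hclosure _ (v23_mem_K h12 h23 hD), mem_lineSet.2 (fl_interPt_left l2 l3)⟩⟩
    · exact ⟨interPt l1 l3, interPt l2 l3, v13_ne_v23 h12 h23 hD,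
        ⟨hclosure _ (v13_mem_K h12 h23 hD),
          mem_lineSet.2 (fl_interPt_right (show l1.1 ≠ l3.1 by linarith))⟩,
        ⟨hclosure _ (v23_mem_K h12 h23 hD),
          mem_lineSet.2 (fl_interPt_right (show l2.1 ≠ l3.1 by linarith))⟩⟩
  · -- disjointness from all lines of F
    intro l hl
    rw [eq_empty_iff_forall_notMem]
    rintro p ⟨hpT, hpl⟩
    rw [mem_lineSet] at hpl
    obtain ⟨t1, t2, t3⟩ := hpT
    by_cases e1 : l = l1
    · rw [e1] at hpl; rw [hpl, mul_zero] at t1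
      exact absurd t1 (lt_irrefl 0)
    by_cases e2 : l = l2
    · rw [e2] at hpl; rw [hpl, mul_zero] at t2
      exact absurd t2 (lt_irrefl 0)
    by_cases e3 : l = l3
    · rw [e3] at hpl; rw [hpl, mul_zero] at t3
      exact absurd t3 (lt_irrefl 0)
    exact hempty l hl e1 e2 e3 p ⟨t1, t2, t3⟩ hpl

theorem build2
    (hmin : ∀ u v : ℝ × ℝ, u ∈ F → v ∈ F → u ≠ l2 → v ≠ l2 → u ≠ v →
      |fl l2 (interPt l1 l3)| ≤ |fl l2 (interPt u v)|) :
    EmptyTriangle F {l1, l2, l3} := by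
  have hD := det_ne hgp h12 h23 m1 m2 m3
  apply build_core hgp h12 h23 m1 m2 m3
  intro c hc hcl1 hcl2 hcl3 p hpT hpc
  have hs1 : c.1 ≠ l1.1 := hgp.1 c hc l1 m1 hcl1
  have hs2 : c.1 ≠ l2.1 := hgp.1 c hc l2 m2 hcl2
  have hs3 : c.1 ≠ l3.1 := hgp.1 c hc l3 m3 hcl3
  have hmem : ∀ e : ℝ × ℝ, e = l1 ∨ e = l3 → e ∈ F := by
    rintro e (rfl | rfl) <;> assumption
  have hnel2 : ∀ e : ℝ × ℝ, e = l1 ∨ e = l3 → e ≠ l2 := by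
    rintro e (rfl | rfl)
    · exact fun h => absurd (h ▸ h12) (lt_irrefl _)
    · exact fun h => absurd (h ▸ h23) (lt_irrefl _)
  have hcne : ∀ e : ℝ × ℝ, e = l1 ∨ e = l3 → c ≠ e := by
    rintro e (rfl | rfl)
    · exact hcl1
    · exact hcl3
  refine empty2 h12 h23 hD hs1 hs2 hs3 ?_ ?_ ?_ hpT hpc
  · rintro e he ⟨q, q1, q2, q3⟩
    exact hgp.2 c hc e (hmem e he) l2 m2 (hcne e he) hcl2 (hnel2 e he)
      ⟨q, mem_lineSet.2 q1, mem_lineSet.2 q2, mem_lineSet.2 q3⟩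
  · rintro ⟨q, q1, q2, q3⟩
    exact hgp.2 c hc l1 m1 l3 m3 hcl1 hcl3 (fun h => absurd (h ▸ (h12.trans h23)) (lt_irrefl _))
      ⟨q, mem_lineSet.2 q1, mem_lineSet.2 q2, mem_lineSet.2 q3⟩
  · intro e he
    exact hmin c e hc (hmem e he) hcl2 (hnel2 e he) (hcne e he)

theorem build1
    (hmin : ∀ u v : ℝ × ℝ, u ∈ F → v ∈ F → u ≠ l1 → v ≠ l1 → u ≠ v →
      |fl l1 (interPt l2 l3)| ≤ |fl l1 (interPt u v)|) :
    EmptyTriangle F {l1, l2, l3} := by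
  have hD := det_ne hgp h12 h23 m1 m2 m3
  apply build_core hgp h12 h23 m1 m2 m3
  intro c hc hcl1 hcl2 hcl3 p hpT hpc
  have hs1 : c.1 ≠ l1.1 := hgp.1 c hc l1 m1 hcl1
  have hs2 : c.1 ≠ l2.1 := hgp.1 c hc l2 m2 hcl2
  have hs3 : c.1 ≠ l3.1 := hgp.1 c hc l3 m3 hcl3
  have hmem : ∀ e : ℝ × ℝ, e = l2 ∨ e = l3 → e ∈ F := by
    rintro e (rfl | rfl) <;> assumption
  have hnel1 : ∀ e : ℝ × ℝ, e = l2 ∨ e = l3 → e ≠ l1 := by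
    rintro e (rfl | rfl)
    · exact fun h => absurd (h ▸ h12) (lt_irrefl _)
    · exact fun h => absurd (h ▸ (h12.trans h23)) (lt_irrefl _)
  have hcne : ∀ e : ℝ × ℝ, e = l2 ∨ e = l3 → c ≠ e := by
    rintro e (rfl | rfl)
    · exact hcl2
    · exact hcl3
  refine empty1 h12 h23 hD hs1 hs2 hs3 ?_ ?_ ?_ hpT hpc
  · rintro e he ⟨q, q1, q2, q3⟩
    exact hgp.2 c hc e (hmem e he) l1 m1 (hcne e he) hcl1 (hnel1 e he)
      ⟨q, mem_lineSet.2 q1, mem_lineSet.2 q2, mem_lineSet.2 q3⟩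
  · rintro ⟨q, q1, q2, q3⟩
    exact hgp.2 c hc l2 m2 l3 m3 hcl2 hcl3 (fun h => absurd (h ▸ h23) (lt_irrefl _))
      ⟨q, mem_lineSet.2 q1, mem_lineSet.2 q2, mem_lineSet.2 q3⟩
  · intro e he
    exact hmin c e hc (hmem e he) hcl1 (hnel1 e he) (hcne e he)

theorem build3
    (hmin : ∀ u v : ℝ × ℝ, u ∈ F → v ∈ F → u ≠ l3 → v ≠ l3 → u ≠ v →
      |fl l3 (interPt l1 l2)| ≤ |fl l3 (interPt u v)|) :
    EmptyTriangle F {l1, l2, l3} := by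
  have hD := det_ne hgp h12 h23 m1 m2 m3
  apply build_core hgp h12 h23 m1 m2 m3
  intro c hc hcl1 hcl2 hcl3 p hpT hpc
  have hs1 : c.1 ≠ l1.1 := hgp.1 c hc l1 m1 hcl1
  have hs2 : c.1 ≠ l2.1 := hgp.1 c hc l2 m2 hcl2
  have hs3 : c.1 ≠ l3.1 := hgp.1 c hc l3 m3 hcl3
  have hmem : ∀ e : ℝ × ℝ, e = l1 ∨ e = l2 → e ∈ F := by
    rintro e (rfl | rfl) <;> assumption
  have hnel3 : ∀ e : ℝ × ℝ, e = l1 ∨ e = l2 → e ≠ l3 := by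
    rintro e (rfl | rfl)
    · exact fun h => absurd (h ▸ (h12.trans h23)) (lt_irrefl _)
    · exact fun h => absurd (h ▸ h23) (lt_irrefl _)
  have hcne : ∀ e : ℝ × ℝ, e = l1 ∨ e = l2 → c ≠ e := by
    rintro e (rfl | rfl)
    · exact hcl1
    · exact hcl2
  refine empty3 h12 h23 hD hs1 hs2 hs3 ?_ ?_ ?_ hpT hpc
  · rintro e he ⟨q, q1, q2, q3⟩
    exact hgp.2 c hc e (hmem e he) l3 m3 (hcne e he) hcl3 (hnel3 e he)
      ⟨q, mem_lineSet.2 q1, mem_lineSet.2 q2, mem_lineSet.2 q3⟩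
  · rintro ⟨q, q1, q2, q3⟩
    exact hgp.2 c hc l1 m1 l2 m2 hcl1 hcl2 (fun h => absurd (h ▸ h12) (lt_irrefl _))
      ⟨q, mem_lineSet.2 q1, mem_lineSet.2 q2, mem_lineSet.2 q3⟩
  · intro e he
    exact hmin c e hc (hmem e he) hcl3 (hnel3 e he) (hcne e he)

end Build

theorem exists_through (F : Finset (ℝ × ℝ)) (hgp : GenPos F) (hN : 3 ≤ F.card)
    {ℓ : ℝ × ℝ} (hℓ : ℓ ∈ F) : ∃ G, EmptyTriangle F G ∧ ℓ ∈ G := by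
  classical
  set F' := F.erase ℓ with hF'
  have hcard : 2 ≤ F'.card := by
    rw [hF', Finset.card_erase_of_mem hℓ]; omega
  obtain ⟨x0, hx0, y0, hy0, hxy0⟩ := Finset.one_lt_card.1 (by omega : 1 < F'.card)
  set P := (F' ×ˢ F').filter (fun q : (ℝ × ℝ) × (ℝ × ℝ) => q.1 ≠ q.2) with hP
  have hPne : P.Nonempty :=
    ⟨(x0, y0), by simp [hP, Finset.mem_filter, Finset.mem_product, hx0, hy0, hxy0]⟩
  obtain ⟨⟨a0, b0⟩, hq0P, hq0min⟩ :=
    Finset.exists_min_image P (fun q => |fl ℓ (interPt q.1 q.2)|) hPne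
  have hq0 : (a0 ∈ F' ∧ b0 ∈ F') ∧ a0 ≠ b0 := by
    have := Finset.mem_filter.1 hq0P
    exact ⟨Finset.mem_product.1 this.1, this.2⟩
  obtain ⟨⟨ha0, hb0⟩, hab0⟩ := hq0
  have ha0F : a0 ∈ F := Finset.mem_of_mem_erase ha0
  have hb0F : b0 ∈ F := Finset.mem_of_mem_erase hb0
  have ha0ℓ : a0 ≠ ℓ := Finset.ne_of_mem_erase ha0
  have hb0ℓ : b0 ≠ ℓ := Finset.ne_of_mem_erase hb0
  have hMIN : ∀ u v : ℝ × ℝ, u ∈ F → v ∈ F → u ≠ ℓ → v ≠ ℓ → u ≠ v →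
      |fl ℓ (interPt a0 b0)| ≤ |fl ℓ (interPt u v)| := by
    intro u v hu hv huℓ hvℓ huv
    exact hq0min (u, v)
      (by simp [hP, hF', Finset.mem_filter, Finset.mem_product, Finset.mem_erase, hu, hv, huℓ, hvℓ, huv])
  have hsa : ℓ.1 ≠ a0.1 := hgp.1 ℓ hℓ a0 ha0F (Ne.symm ha0ℓ)
  have hsb : ℓ.1 ≠ b0.1 := hgp.1 ℓ hℓ b0 hb0F (Ne.symm hb0ℓ)
  have hsab : a0.1 ≠ b0.1 := hgp.1 a0 ha0F b0 hb0F hab0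
  have hsymm : interPt b0 a0 = interPt a0 b0 := interPt_symm (Ne.symm hsab)
  rcases hsa.lt_or_gt with hLa | haL
  · rcases hsb.lt_or_gt with hLb | hbL
    · rcases hsab.lt_or_gt with hab' | hba'
      · -- ℓ < a0 < b0
        refine ⟨{ℓ, a0, b0}, build1 hgp hLa hab' hℓ ha0F hb0F ?_, by simp⟩
        intro u v hu hv huℓ hvℓ huv
        exact hMIN u v hu hv huℓ hvℓ huv
      · -- ℓ < b0 < a0
        refine ⟨{ℓ, b0, a0}, build1 hgp hLb hba' hℓ hb0F ha0F ?_, by simp⟩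
        intro u v hu hv huℓ hvℓ huv
        rw [hsymm]
        exact hMIN u v hu hv huℓ hvℓ huv
    · -- b0 < ℓ < a0
      refine ⟨{b0, ℓ, a0}, build2 hgp hbL hLa hb0F hℓ ha0F ?_, by simp⟩
      intro u v hu hv huℓ hvℓ huv
      rw [hsymm]
      exact hMIN u v hu hv huℓ hvℓ huv
  · rcases hsb.lt_or_gt with hLb | hbL
    · -- a0 < ℓ < b0
      refine ⟨{a0, ℓ, b0}, build2 hgp haL hLb ha0F hℓ hb0F ?_, by simp⟩
      intro u v hu hv huℓ hvℓ huv
      exact hMIN u v hu hv huℓ hvℓ huv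
    · rcases hsab.lt_or_gt with hab' | hba'
      · -- a0 < b0 < ℓ
        refine ⟨{a0, b0, ℓ}, build3 hgp hab' hbL ha0F hb0F hℓ ?_, by simp⟩
        intro u v hu hv huℓ hvℓ huv
        exact hMIN u v hu hv huℓ hvℓ huv
      · -- b0 < a0 < ℓ
        refine ⟨{b0, a0, ℓ}, build3 hgp hba' haL hb0F ha0F hℓ ?_, by simp⟩
        intro u v hu hv huℓ hvℓ huv
        rw [hsymm]
        exact hMIN u v hu hv huℓ hvℓ huv

end Tri

/-- Every family of N ≥ 3 lines in general position defines an empty triangle,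
and in fact at least N/3 of them. -/
theorem stmt17 (F : Finset (ℝ × ℝ)) (hgp : GenPos F) (hN : 3 ≤ F.card) :
    (∃ G, EmptyTriangle F G) ∧
      ∃ S : Finset (Finset (ℝ × ℝ)), (∀ G ∈ S, EmptyTriangle F G) ∧
        F.card ≤ 3 * S.card := by
  classical
  have hne : F.Nonempty := Finset.card_pos.1 (by omega)
  have H : ∀ ℓ ∈ F, ∃ G, EmptyTriangle F G ∧ ℓ ∈ G := fun ℓ h => Tri.exists_through F hgp hN h
  constructor
  · obtain ⟨ℓ0, hℓ0⟩ := hne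
    obtain ⟨G, hG, _⟩ := H ℓ0 hℓ0
    exact ⟨G, hG⟩
  · set t : ℝ × ℝ → Finset (ℝ × ℝ) :=
      fun ℓ => if h : ℓ ∈ F then (H ℓ h).choose else ∅ with ht
    have hts : ∀ ℓ (h : ℓ ∈ F), EmptyTriangle F (t ℓ) ∧ ℓ ∈ t ℓ := by
      intro ℓ h
      rw [ht]
      simp only [dif_pos h]
      exact (H ℓ h).choose_spec
    refine ⟨F.image t, ?_, ?_⟩
    · intro G hG
      obtain ⟨ℓ, hℓ, rfl⟩ := Finset.mem_image.1 hG
      exact (hts ℓ hℓ).1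
    · apply Finset.card_le_mul_card_image
      intro b hb
      obtain ⟨ℓ0, hℓ0, rfl⟩ := Finset.mem_image.1 hb
      have hsub : (F.filter (fun x => t x = t ℓ0)) ⊆ t ℓ0 := by
        intro x hx
        obtain ⟨hxF, hxe⟩ := Finset.mem_filter.1 hx
        have := (hts x hxF).2
        rwa [hxe] at this
      calc (F.filter fun x => t x = t ℓ0).card ≤ (t ℓ0).card := Finset.card_le_card hsub
        _ = 3 := (hts ℓ0 hℓ0).1.2.1
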